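/- arXiv:0710.1994 — 5 statements merged into one kernel-verified Lean document; each statement's English description precedes it below -/
import Mathlib

section
/- Let (X_i)_{i∈I} be a family of finite nonempty metric spaces that is bd-Ramsey: for every K > 1, every ε > 0 and every i ∈ I there exists j ∈ I such that for every metric space H and every injective map f : X_j → H with dist(f) ≤ K, there exists an injective map g : X_i → X_j with dist(g) ≤ 1+ε and dist(f restricted to g(X_i)) ≤ 1+ε. Then for every metric space H exactly one of the following holds: either sup_{i∈I} c_H(X_i) = 1 (i.e. for every i and every ε > 0 there is an injective map X_i → H of distortion ≤ 1+ε), or sup_{i∈I} c_H(X_i) = ∞ (i.e. for every K there is some i with c_H(X_i) > K). -/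
open scoped Classical in
/-- The Lipschitz norm `‖f‖_Lip = sup_{x ≠ y} d(f x, f y) / d(x, y)` of a map between
(pseudo)metric spaces. -/
noncomputable def lipNorm {X H : Type*} [PseudoMetricSpace X] [PseudoMetricSpace H]
    (f : X → H) : ℝ :=
  ⨆ p : X × X, if p.1 = p.2 then 0 else dist (f p.1) (f p.2) / dist p.1 p.2

open scoped Classical in
/-- The Lipschitz norm of the inverse of an injective map `f`, i.e.
`‖f⁻¹‖_Lip = sup_{x ≠ y} d(x, y) / d(f x, f y)`. -/
noncomputable def colipNorm {X H : Type*} [PseudoMetricSpace X] [PseudoMetricSpace H]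
    (f : X → H) : ℝ :=
  ⨆ p : X × X, if p.1 = p.2 then 0 else dist p.1 p.2 / dist (f p.1) (f p.2)

/-- The distortion `dist(f) = ‖f‖_Lip * ‖f⁻¹‖_Lip` of an (injective) map between metric spaces. -/
noncomputable def distortion {X H : Type*} [PseudoMetricSpace X] [PseudoMetricSpace H]
    (f : X → H) : ℝ := lipNorm f * colipNorm f


section Aux
variable {X H : Type*} [PseudoMetricSpace X] [PseudoMetricSpace H]

lemma ratio_le_lipNorm [Finite X] (f : X → H) {x y : X} (h : x ≠ y) :
    dist (f x) (f y) / dist x y ≤ lipNorm f := by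
  classical
  have := le_ciSup (Finite.bddAbove_range
    (fun p : X × X => if p.1 = p.2 then 0 else dist (f p.1) (f p.2) / dist p.1 p.2)) (x, y)
  simpa [lipNorm, if_neg h] using this

lemma ratio_le_colipNorm [Finite X] (f : X → H) {x y : X} (h : x ≠ y) :
    dist x y / dist (f x) (f y) ≤ colipNorm f := by
  classical
  have := le_ciSup (Finite.bddAbove_range
    (fun p : X × X => if p.1 = p.2 then 0 else dist p.1 p.2 / dist (f p.1) (f p.2))) (x, y)
  simpa [colipNorm, if_neg h] using this

lemma lipNorm_le [Nonempty X] {f : X → H} {C : ℝ} (hC : 0 ≤ C)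
    (h : ∀ x y, x ≠ y → dist (f x) (f y) / dist x y ≤ C) : lipNorm f ≤ C := by
  refine ciSup_le fun p => ?_
  split_ifs with hp
  · exact hC
  · exact h _ _ hp

lemma colipNorm_le [Nonempty X] {f : X → H} {C : ℝ} (hC : 0 ≤ C)
    (h : ∀ x y, x ≠ y → dist x y / dist (f x) (f y) ≤ C) : colipNorm f ≤ C := by
  refine ciSup_le fun p => ?_
  split_ifs with hp
  · exact hC
  · exact h _ _ hp

lemma lipNorm_nonneg [Finite X] [Nonempty X] (f : X → H) : 0 ≤ lipNorm f := by
  classical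
  obtain ⟨x⟩ := ‹Nonempty X›
  have := le_ciSup (Finite.bddAbove_range
    (fun p : X × X => if p.1 = p.2 then 0 else dist (f p.1) (f p.2) / dist p.1 p.2)) (x, x)
  simpa [lipNorm] using this

lemma colipNorm_nonneg [Finite X] [Nonempty X] (f : X → H) : 0 ≤ colipNorm f := by
  classical
  obtain ⟨x⟩ := ‹Nonempty X›
  have := le_ciSup (Finite.bddAbove_range
    (fun p : X × X => if p.1 = p.2 then 0 else dist p.1 p.2 / dist (f p.1) (f p.2))) (x, x)
  simpa [colipNorm] using this

lemma distortion_nonneg [Finite X] [Nonempty X] (f : X → H) : 0 ≤ distortion f :=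
  mul_nonneg (lipNorm_nonneg f) (colipNorm_nonneg f)

end Aux

lemma distortion_comp_le {X Y H : Type*} [MetricSpace X] [MetricSpace Y] [MetricSpace H]
    [Finite X] [Nonempty X] [Finite Y] (g : X → Y) (hg : Function.Injective g) (f : Y → H) :
    distortion (f ∘ g) ≤ distortion (fun y : Set.range g => f y.1) * distortion g := by
  classical
  set f' : Set.range g → H := fun y => f y.1 with hf'
  have : Nonempty (Set.range g) := ⟨⟨g (Classical.arbitrary X), Set.mem_range_self _⟩⟩
  have hL : lipNorm (f ∘ g) ≤ lipNorm f' * lipNorm g := by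
    refine lipNorm_le (mul_nonneg (lipNorm_nonneg f') (lipNorm_nonneg g)) fun x y hxy => ?_
    have hgxy : g x ≠ g y := fun h => hxy (hg h)
    have hd : dist (g x) (g y) ≠ 0 := ne_of_gt (dist_pos.2 hgxy)
    have key : dist (f (g x)) (f (g y)) / dist x y
        = (dist (f (g x)) (f (g y)) / dist (g x) (g y)) * (dist (g x) (g y) / dist x y) := by
      rw [div_mul_div_comm, mul_comm (dist (g x) (g y)) (dist x y),
        mul_div_mul_right _ _ hd]
    show dist (f (g x)) (f (g y)) / dist x y ≤ _
    rw [key]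
    have h1 : dist (f (g x)) (f (g y)) / dist (g x) (g y) ≤ lipNorm f' := by
      have hne : (⟨g x, Set.mem_range_self x⟩ : Set.range g) ≠ ⟨g y, Set.mem_range_self y⟩ :=
        fun h => hgxy (congrArg Subtype.val h)
      simpa [hf', Subtype.dist_eq] using ratio_le_lipNorm f' hne
    exact mul_le_mul h1 (ratio_le_lipNorm g hxy)
      (div_nonneg dist_nonneg dist_nonneg) (lipNorm_nonneg f')
  have hC : colipNorm (f ∘ g) ≤ colipNorm f' * colipNorm g := by
    refine colipNorm_le (mul_nonneg (colipNorm_nonneg f') (colipNorm_nonneg g)) fun x y hxy => ?_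
    have hgxy : g x ≠ g y := fun h => hxy (hg h)
    have hd : dist (g x) (g y) ≠ 0 := ne_of_gt (dist_pos.2 hgxy)
    have key : dist x y / dist (f (g x)) (f (g y))
        = (dist (g x) (g y) / dist (f (g x)) (f (g y))) * (dist x y / dist (g x) (g y)) := by
      by_cases hc : dist (f (g x)) (f (g y)) = 0
      · simp [hc]
      · field_simp
    show dist x y / dist (f (g x)) (f (g y)) ≤ _
    rw [key]
    have h1 : dist (g x) (g y) / dist (f (g x)) (f (g y)) ≤ colipNorm f' := by
      have hne : (⟨g x, Set.mem_range_self x⟩ : Set.range g) ≠ ⟨g y, Set.mem_range_self y⟩ :=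
        fun h => hgxy (congrArg Subtype.val h)
      simpa [hf', Subtype.dist_eq] using ratio_le_colipNorm f' hne
    exact mul_le_mul h1 (ratio_le_colipNorm g hxy)
      (div_nonneg dist_nonneg dist_nonneg) (colipNorm_nonneg f')
  calc distortion (f ∘ g) = lipNorm (f ∘ g) * colipNorm (f ∘ g) := rfl
    _ ≤ (lipNorm f' * lipNorm g) * (colipNorm f' * colipNorm g) :=
        mul_le_mul hL hC (colipNorm_nonneg _)
          (mul_nonneg (lipNorm_nonneg f') (lipNorm_nonneg g))
    _ = distortion f' * distortion g := by unfold distortion; ring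

universe u v

/-- If a family `(X i)` of finite nonempty metric spaces is bd-Ramsey, then it
has the qualitative dichotomy property: for every host metric space `H`, exactly one of the
following holds: either every `X i` embeds in `H` with distortion arbitrarily close to `1`
(i.e. `sup_i c_H (X i) = 1`), or the distortions are unbounded (for every `K` some `X i` admits
no embedding of distortion `< K`, i.e. `sup_i c_H (X i) = ∞`). -/
theorem bdRamsey_implies_dichotomy {I : Type v} (X : I → Type u)
    [∀ i, MetricSpace (X i)] [∀ i, Finite (X i)] [∀ i, Nonempty (X i)]
    (hbd : ∀ K : ℝ, 1 < K → ∀ ε : ℝ, 0 < ε → ∀ i : I, ∃ j : I,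
      ∀ (H : Type u) [MetricSpace H], ∀ f : X j → H, Function.Injective f →
        distortion f ≤ K →
          ∃ g : X i → X j, Function.Injective g ∧ distortion g ≤ 1 + ε ∧
            distortion (fun y : Set.range g => f y.1) ≤ 1 + ε)
    (H : Type u) [MetricSpace H] :
    Xor'
      (∀ i : I, ∀ ε : ℝ, 0 < ε →
        ∃ f : X i → H, Function.Injective f ∧ distortion f ≤ 1 + ε)
      (∀ K : ℝ, ∃ i : I, ∀ f : X i → H, Function.Injective f → K ≤ distortion f) := by
  have main : (¬ ∀ K : ℝ, ∃ i : I, ∀ f : X i → H, Function.Injective f → K ≤ distortion f) →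
      (∀ i : I, ∀ ε : ℝ, 0 < ε → ∃ f : X i → H, Function.Injective f ∧ distortion f ≤ 1 + ε) := by
    intro hB i ε hε
    push_neg at hB
    obtain ⟨K, hK⟩ := hB
    set ε' := min (ε / 3) 1 with hε'def
    have hε'pos : 0 < ε' := lt_min (by linarith) one_pos
    obtain ⟨j, hj⟩ := hbd (max K 2) (lt_of_lt_of_le one_lt_two (le_max_right K 2)) ε' hε'pos i
    obtain ⟨f, hfinj, hfd⟩ := hK j
    obtain ⟨g, hginj, hgd, hfd'⟩ := hj H f hfinj (hfd.le.trans (le_max_left K 2))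
    refine ⟨f ∘ g, hfinj.comp hginj, ?_⟩
    have h0 := distortion_comp_le g hginj f
    have h2 : distortion (fun y : Set.range g => f y.1) * distortion g ≤ (1 + ε') * (1 + ε') :=
      mul_le_mul hfd' hgd (distortion_nonneg g) (by linarith)
    have h3 : (1 + ε') * (1 + ε') ≤ 1 + ε := by
      have ha : ε' ≤ ε / 3 := min_le_left _ _
      have hb : ε' ≤ 1 := min_le_right _ _
      nlinarith
    linarith
  by_cases hB : ∀ K : ℝ, ∃ i : I, ∀ f : X i → H, Function.Injective f → K ≤ distortion f
  · refine Or.inr ⟨hB, fun hA => ?_⟩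
    obtain ⟨i, hi⟩ := hB 3
    obtain ⟨f, hfinj, hfd⟩ := hA i 1 one_pos
    have := hi f hfinj
    linarith
  · exact Or.inl ⟨main hB, hB⟩
end

section
/- For every metric space H and every n ≥ 1: if Ψ_n(H) = 1, then c_H(P_n) = 1; that is, for every ε > 0 there exists an injective map f : {0,1,…,n} → H with distortion dist(f) ≤ 1+ε. -/
/-- The path `P n = {0, 1, …, n}`, realized as a subset of `ℝ` (so that the induced metric is
`d(i,j) = |i - j|`). -/
def PathSet (n : ℕ) : Set ℝ := {x | ∃ k : ℕ, k ≤ n ∧ x = (k : ℝ)}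

/-- `Ψ_n(H)`: the infimum over all `Ψ > 0` such that every map `f : {0,…,n} → H` satisfies
`d(f 0, f n) ≤ Ψ * n * max_{0 ≤ i ≤ n-1} d(f i, f (i+1))`.  (A map on `{0,…,n}` is encoded as a
map on `ℕ`; only the values at `0,…,n` occur in the inequality.) -/
noncomputable def Psi (H : Type*) [MetricSpace H] (n : ℕ) : ℝ :=
  sInf {Ψ : ℝ | 0 < Ψ ∧ ∀ f : ℕ → H,
    dist (f 0) (f n) ≤ Ψ * n * ⨆ i : Fin n, dist (f i.1) (f (i.1 + 1))}

private lemma chain_bound {H : Type*} [PseudoMetricSpace H] (f : ℕ → H) (n : ℕ) (S : ℝ)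
    (hstep : ∀ k, k < n → dist (f k) (f (k + 1)) ≤ S) :
    ∀ a b, a ≤ b → b ≤ n → dist (f a) (f b) ≤ ((b : ℝ) - a) * S := by
  intro a b hab hbn
  induction b, hab using Nat.le_induction with
  | base => simp
  | succ m hm ih =>
    have h1 : dist (f a) (f m) ≤ ((m : ℝ) - a) * S := ih (by omega)
    have h2 := hstep m (by omega)
    calc dist (f a) (f (m + 1)) ≤ dist (f a) (f m) + dist (f m) (f (m + 1)) :=
          dist_triangle _ _ _
      _ ≤ ((m : ℝ) - a) * S + S := add_le_add h1 h2
      _ = (((m + 1 : ℕ) : ℝ) - a) * S := by push_cast; ring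

private lemma one_le_abs_sub {a b : ℕ} (hab : a ≠ b) : (1 : ℝ) ≤ |(a : ℝ) - b| := by
  rcases hab.lt_or_gt with hl | hl
  · rw [abs_sub_comm, abs_of_nonneg (sub_nonneg.2 (by exact_mod_cast hl.le))]
    have : (a : ℝ) + 1 ≤ b := by exact_mod_cast hl
    linarith
  · rw [abs_of_nonneg (sub_nonneg.2 (by exact_mod_cast hl.le))]
    have : (b : ℝ) + 1 ≤ a := by exact_mod_cast hl
    linarith

/-- For every metric space `H` and `n ≥ 1`: if `Ψ_n(H) = 1` then
`c_H (P n) = 1`, i.e. for every `ε > 0` there is an injective map `f : {0,…,n} → H`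
with distortion at most `1 + ε`. -/
theorem psi_eq_one_implies_path_embeds (H : Type*) [MetricSpace H] (n : ℕ) (hn : 1 ≤ n)
    (h : Psi H n = 1) :
    ∀ ε : ℝ, 0 < ε → ∃ f : PathSet n → H, Function.Injective f ∧ distortion f ≤ 1 + ε := by
  intro ε hε
  have hn0 : (0 : ℝ) < n := by exact_mod_cast hn
  set δ : ℝ := ε / (1 + ε) with hδdef
  have hδpos : 0 < δ := by positivity
  have hδlt : δ < 1 := by rw [hδdef, div_lt_one (by linarith)]; linarith
  have hde : (1 + ε) * δ = ε := by rw [hδdef]; field_simp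
  set Ψ : ℝ := 1 - δ / n with hΨdef
  have hδdiv : δ / n ≤ δ := div_le_self hδpos.le (by exact_mod_cast hn)
  have hΨpos : 0 < Ψ := by rw [hΨdef]; linarith
  have hΨlt : Ψ < 1 := by
    rw [hΨdef]; have : 0 < δ / n := div_pos hδpos hn0; linarith
  have hmem : Ψ ∉ {Ψ : ℝ | 0 < Ψ ∧ ∀ f : ℕ → H,
      dist (f 0) (f n) ≤ Ψ * n * ⨆ i : Fin n, dist (f i.1) (f (i.1 + 1))} := by
    intro hΨmem
    have hle : Psi H n ≤ Ψ := csInf_le ⟨0, fun x hx => hx.1.le⟩ hΨmem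
    rw [h] at hle; linarith
  have hex : ∃ f : ℕ → H,
      Ψ * n * (⨆ i : Fin n, dist (f i.1) (f (i.1 + 1))) < dist (f 0) (f n) := by
    by_contra hcon
    push_neg at hcon
    exact hmem ⟨hΨpos, fun f => hcon f⟩
  obtain ⟨f, hf⟩ := hex
  haveI : Nonempty (Fin n) := ⟨⟨0, hn⟩⟩
  set S : ℝ := ⨆ i : Fin n, dist (f i.1) (f (i.1 + 1)) with hSdef
  have hSnn : 0 ≤ S := Real.iSup_nonneg fun i => dist_nonneg
  have hstep : ∀ k, k < n → dist (f k) (f (k + 1)) ≤ S := by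
    intro k hk
    have := le_ciSup (f := fun i : Fin n => dist (f i.1) (f (i.1 + 1)))
      (Set.finite_range _).bddAbove (⟨k, hk⟩ : Fin n)
    simpa using this
  have hchain := chain_bound f n S hstep
  have hfn : dist (f 0) (f n) ≤ (n : ℝ) * S := by
    simpa using hchain 0 n (Nat.zero_le n) le_rfl
  have hSpos : 0 < S := by
    by_contra hS
    push_neg at hS
    have h0 : S = 0 := le_antisymm hS hSnn
    rw [h0, mul_zero] at hf hfn
    linarith
  have hΨn : Ψ * n = n - δ := by
    rw [hΨdef, sub_mul, one_mul, div_mul_cancel₀ _ (ne_of_gt hn0)]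
  rw [hΨn] at hf
  -- upper bound on pairwise distances
  have hup : ∀ i j : ℕ, i ≤ n → j ≤ n → dist (f i) (f j) ≤ |(i : ℝ) - j| * S := by
    intro i j hi hj
    rcases le_total i j with hij | hij
    · rw [abs_sub_comm, abs_of_nonneg (sub_nonneg.2 (by exact_mod_cast hij))]
      exact hchain i j hij hj
    · rw [dist_comm, abs_of_nonneg (sub_nonneg.2 (by exact_mod_cast hij))]
      exact hchain j i hij hi
  -- lower bound on pairwise distances
  have hlo' : ∀ i j : ℕ, i < j → j ≤ n → ((j : ℝ) - i - δ) * S ≤ dist (f i) (f j) := by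
    intro i j hij hj
    have h1 : dist (f 0) (f i) ≤ (i : ℝ) * S := by
      simpa using hchain 0 i (Nat.zero_le _) (le_trans hij.le hj)
    have h2 : dist (f j) (f n) ≤ ((n : ℝ) - j) * S := hchain j n hj le_rfl
    have h3 : dist (f 0) (f n) ≤ dist (f 0) (f i) + dist (f i) (f j) + dist (f j) (f n) :=
      dist_triangle4 _ _ _ _
    nlinarith [hf, h1, h2, h3]
  have hlo : ∀ i j : ℕ, i ≤ n → j ≤ n → i ≠ j →
      (|(i : ℝ) - j| - δ) * S ≤ dist (f i) (f j) := by
    intro i j hi hj hij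
    rcases hij.lt_or_gt with hl | hl
    · rw [abs_sub_comm, abs_of_nonneg (sub_nonneg.2 (by exact_mod_cast hl.le))]
      exact hlo' i j hl hj
    · rw [dist_comm, abs_of_nonneg (sub_nonneg.2 (by exact_mod_cast hl.le))]
      exact hlo' j i hl hi
  -- construct the embedding
  have hmem0 : (0 : ℝ) ∈ PathSet n := ⟨0, Nat.zero_le n, by simp⟩
  haveI : Nonempty (PathSet n) := ⟨⟨0, hmem0⟩⟩
  choose idx hidx1 hidx2 using fun x : PathSet n => x.2
  set g : PathSet n → H := fun x => f (idx x) with hgdef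
  have hidxne : ∀ x y : PathSet n, x ≠ y → idx x ≠ idx y := by
    intro x y hxy he
    apply hxy
    apply Subtype.ext
    rw [hidx2 x, hidx2 y, he]
  have hdxy : ∀ x y : PathSet n, dist x y = |(idx x : ℝ) - idx y| := by
    intro x y
    rw [Subtype.dist_eq, Real.dist_eq]
    rw [show (x : ℝ) = (idx x : ℝ) from hidx2 x, show (y : ℝ) = (idx y : ℝ) from hidx2 y]
  have hgpos : ∀ x y : PathSet n, x ≠ y → 0 < dist (g x) (g y) := by
    intro x y hxy
    have hne := hidxne x y hxy
    have h1 := one_le_abs_sub hne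
    have h2 := hlo (idx x) (idx y) (hidx1 x) (hidx1 y) hne
    have h3 : 0 < (|(idx x : ℝ) - idx y| - δ) * S :=
      mul_pos (by linarith) hSpos
    calc (0 : ℝ) < (|(idx x : ℝ) - idx y| - δ) * S := h3
      _ ≤ dist (f (idx x)) (f (idx y)) := h2
  refine ⟨g, ?_, ?_⟩
  · intro x y hxy
    by_contra hne
    exact absurd hxy (dist_pos.mp (hgpos x y hne))
  · have hlip : lipNorm g ≤ S := by
      unfold lipNorm
      apply ciSup_le
      intro p
      split_ifs with hpe
      · exact hSnn
      · have hdp : 0 < dist p.1 p.2 := dist_pos.2 hpe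
        rw [div_le_iff₀ hdp, hdxy p.1 p.2, mul_comm]
        exact hup _ _ (hidx1 _) (hidx1 _)
    have hcolip : colipNorm g ≤ (1 + ε) / S := by
      unfold colipNorm
      apply ciSup_le
      intro p
      split_ifs with hpe
      · positivity
      · have hgp := hgpos p.1 p.2 hpe
        have hne := hidxne p.1 p.2 hpe
        have h1 := one_le_abs_sub hne
        have h2 := hlo (idx p.1) (idx p.2) (hidx1 p.1) (hidx1 p.2) hne
        rw [div_le_div_iff₀ hgp hSpos, hdxy p.1 p.2]
        have hdeS : (1 + ε) * δ * S = ε * S := by rw [hde]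
        have key : |(idx p.1 : ℝ) - idx p.2| * S ≤
            (1 + ε) * ((|(idx p.1 : ℝ) - idx p.2| - δ) * S) := by
          nlinarith [mul_nonneg (mul_nonneg hε.le
            (show (0 : ℝ) ≤ |(idx p.1 : ℝ) - idx p.2| - 1 by linarith)) hSnn, hdeS]
        calc |(idx p.1 : ℝ) - idx p.2| * S
            ≤ (1 + ε) * ((|(idx p.1 : ℝ) - idx p.2| - δ) * S) := key
          _ ≤ (1 + ε) * dist (g p.1) (g p.2) := by
              apply mul_le_mul_of_nonneg_left h2 (by linarith)
    have hcnn : 0 ≤ colipNorm g := by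
      apply Real.iSup_nonneg
      intro p
      split_ifs with hpe
      · exact le_rfl
      · positivity
    unfold distortion
    calc lipNorm g * colipNorm g ≤ S * ((1 + ε) / S) :=
          mul_le_mul hlip hcolip hcnn hSnn
      _ = 1 + ε := by rw [mul_comm, div_mul_cancel₀ _ (ne_of_gt hSpos)]
end

section
/- For every metric space H and all integers m, n ≥ 1, Ψ_{mn}(H) ≤ Ψ_m(H) · Ψ_n(H). -/
noncomputable def PsiSet (H : Type*) [MetricSpace H] (n : ℕ) : Set ℝ :=
  {Ψ : ℝ | 0 < Ψ ∧ ∀ f : ℕ → H,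
    dist (f 0) (f n) ≤ Ψ * n * ⨆ i : Fin n, dist (f i.1) (f (i.1 + 1))}

lemma sup_nonneg_aux {H : Type*} [MetricSpace H] {n : ℕ} (hn : 1 ≤ n) (f : ℕ → H) :
    0 ≤ ⨆ i : Fin n, dist (f i.1) (f (i.1 + 1)) := by
  have hbdd : BddAbove (Set.range fun i : Fin n => dist (f i.1) (f (i.1 + 1))) :=
    (Set.finite_range _).bddAbove
  exact le_trans dist_nonneg (le_ciSup hbdd ⟨0, hn⟩)

lemma one_mem_psiSet {H : Type*} [MetricSpace H] {n : ℕ} (hn : 1 ≤ n) :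
    (1 : ℝ) ∈ PsiSet H n := by
  refine ⟨one_pos, fun f => ?_⟩
  have hbdd : BddAbove (Set.range fun i : Fin n => dist (f i.1) (f (i.1 + 1))) :=
    (Set.finite_range _).bddAbove
  calc dist (f 0) (f n) ≤ ∑ i ∈ Finset.range n, dist (f i) (f (i + 1)) :=
        dist_le_range_sum_dist f n
    _ ≤ ∑ _i ∈ Finset.range n, ⨆ i : Fin n, dist (f i.1) (f (i.1 + 1)) := by
        refine Finset.sum_le_sum fun i hi => ?_
        exact le_ciSup hbdd ⟨i, Finset.mem_range.mp hi⟩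
    _ = 1 * n * ⨆ i : Fin n, dist (f i.1) (f (i.1 + 1)) := by
        simp [Finset.sum_const, mul_assoc]

lemma mul_mem_psiSet {H : Type*} [MetricSpace H] {m n : ℕ} (hm : 1 ≤ m) (hn : 1 ≤ n)
    {a b : ℝ} (ha : a ∈ PsiSet H m) (hb : b ∈ PsiSet H n) :
    a * b ∈ PsiSet H (m * n) := by
  obtain ⟨ha0, haf⟩ := ha
  obtain ⟨hb0, hbf⟩ := hb
  refine ⟨mul_pos ha0 hb0, fun f => ?_⟩
  set M : ℝ := ⨆ i : Fin (m * n), dist (f i.1) (f (i.1 + 1)) with hM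
  have hmn : 1 ≤ m * n := Nat.one_le_iff_ne_zero.mpr (by positivity)
  have hM0 : 0 ≤ M := sup_nonneg_aux hmn f
  have hbddmn : BddAbove (Set.range fun i : Fin (m * n) => dist (f i.1) (f (i.1 + 1))) :=
    (Set.finite_range _).bddAbove
  have hMle : ∀ k : ℕ, k < m * n → dist (f k) (f (k + 1)) ≤ M := fun k hk =>
    le_ciSup hbddmn ⟨k, hk⟩
  have step : ∀ j : Fin n, dist (f (j.1 * m)) (f ((j.1 + 1) * m)) ≤ a * m * M := by
    intro j
    rw [Nat.succ_mul]
    have h1 := haf (fun i => f (j.1 * m + i))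
    simp only [Nat.add_zero] at h1
    refine h1.trans (mul_le_mul_of_nonneg_left ?_ (by positivity))
    have hnem : Nonempty (Fin m) := ⟨⟨0, hm⟩⟩
    refine ciSup_le fun i => ?_
    rw [← Nat.add_assoc]
    refine hMle _ ?_
    have h2 : j.1 * m + i.1 < (j.1 + 1) * m := by
      rw [Nat.succ_mul]; omega
    have h3 : (j.1 + 1) * m ≤ n * m := Nat.mul_le_mul_right m j.2
    have h4 : n * m = m * n := Nat.mul_comm n m
    omega
  have h2 := hbf (fun j => f (j * m))
  simp only [Nat.zero_mul] at h2
  have hnen : Nonempty (Fin n) := ⟨⟨0, hn⟩⟩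
  have hsup2 : (⨆ j : Fin n, dist (f (j.1 * m)) (f ((j.1 + 1) * m))) ≤ a * m * M :=
    ciSup_le step
  calc dist (f 0) (f (m * n)) = dist (f 0) (f (n * m)) := by rw [Nat.mul_comm]
    _ ≤ b * n * ⨆ j : Fin n, dist (f (j.1 * m)) (f ((j.1 + 1) * m)) := h2
    _ ≤ b * n * (a * m * M) := mul_le_mul_of_nonneg_left hsup2 (by positivity)
    _ = a * b * ((m * n : ℕ) : ℝ) * M := by push_cast; ring

/-- For every metric space `H` and all `m, n ≥ 1`,
`Ψ_{mn}(H) ≤ Ψ_m(H) * Ψ_n(H)`. -/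
theorem psi_submultiplicative (H : Type*) [MetricSpace H] (m n : ℕ)
    (hm : 1 ≤ m) (hn : 1 ≤ n) :
    Psi H (m * n) ≤ Psi H m * Psi H n := by
  have hPsiEq : ∀ k : ℕ, Psi H k = sInf (PsiSet H k) := fun _ => rfl
  have hne_m : (PsiSet H m).Nonempty := ⟨1, one_mem_psiSet hm⟩
  have hne_n : (PsiSet H n).Nonempty := ⟨1, one_mem_psiSet hn⟩
  have hbdd : ∀ k : ℕ, BddBelow (PsiSet H k) := fun k => ⟨0, fun x hx => le_of_lt hx.1⟩
  have hPm0 : 0 ≤ Psi H m := by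
    rw [hPsiEq]; exact le_csInf hne_m fun x hx => le_of_lt hx.1
  have hPn0 : 0 ≤ Psi H n := by
    rw [hPsiEq]; exact le_csInf hne_n fun x hx => le_of_lt hx.1
  have key : ∀ δ : ℝ, 0 < δ → Psi H (m * n) ≤ (Psi H m + δ) * (Psi H n + δ) := by
    intro δ hδ
    obtain ⟨a, haS, halt⟩ := Real.lt_sInf_add_pos hne_m hδ
    obtain ⟨b, hbS, hblt⟩ := Real.lt_sInf_add_pos hne_n hδ
    have h1 : Psi H (m * n) ≤ a * b := by
      rw [hPsiEq]
      exact csInf_le (hbdd _) (mul_mem_psiSet hm hn haS hbS)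
    have ha0 : 0 < a := haS.1
    have hb0 : 0 < b := hbS.1
    have halt' : a < Psi H m + δ := by rw [hPsiEq m]; exact halt
    have hblt' : b < Psi H n + δ := by rw [hPsiEq n]; exact hblt
    nlinarith [h1, halt', hblt', hPm0, hPn0, ha0, hb0, hδ]
  by_contra hcon
  push_neg at hcon
  set ε : ℝ := Psi H (m * n) - Psi H m * Psi H n with hε
  have hε0 : 0 < ε := by simp only [hε]; linarith
  set C : ℝ := Psi H m + Psi H n + 1 with hC
  have hC0 : 0 < C := by positivity
  set δ : ℝ := min 1 (ε / (2 * C)) with hδdef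
  have hδ0 : 0 < δ := lt_min one_pos (by positivity)
  have hδ1 : δ ≤ 1 := min_le_left _ _
  have hδ2 : δ ≤ ε / (2 * C) := min_le_right _ _
  have hk := key δ hδ0
  have hle : δ * (2 * C) ≤ ε := (le_div_iff₀ (by positivity)).mp hδ2
  nlinarith
end

section
/- For every metric space H and all integers m, n ≥ 1, T_{mn}(H) ≤ T_m(H) · T_n(H). -/
/-- The average of a real-valued function over a finite type. -/
noncomputable def avg {α : Type*} [Fintype α] (g : α → ℝ) : ℝ :=
  (∑ x, g x) / (Fintype.card α)


/-- The Hamming cube `{0,1}^n`: vectors over `ZMod 2` with the Hamming metric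
`d(x,y) = #{i : x i ≠ y i} = Σ_i |x_i - y_i|`, and with coordinatewise addition mod 2. -/
abbrev Cube (n : ℕ) := Hamming (fun _ : Fin n => ZMod 2)

/-- The all-ones vector `𝟏 ∈ {0,1}^n`. -/
def Cube.one (n : ℕ) : Cube n := Hamming.toHamming (fun _ => 1)

/-- The standard basis vector `e i ∈ {0,1}^n`. -/
def Cube.e {n : ℕ} (i : Fin n) : Cube n := Hamming.toHamming (fun j => if j = i then 1 else 0)


/-- `T_n(H)`: the infimum over all `T > 0` such that every `f : {0,1}^n → H` satisfies
`Avg_x d(f x, f (x + 𝟏))² ≤ T² * n * Σ_{i=1}^n Avg_x d(f x, f (x + e i))²`. -/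
noncomputable def Tn (H : Type*) [MetricSpace H] (n : ℕ) : ℝ :=
  sInf {T : ℝ | 0 < T ∧ ∀ f : Cube n → H,
    avg (fun x : Cube n => dist (f x) (f (x + Cube.one n)) ^ 2) ≤
      T ^ 2 * n * ∑ i : Fin n, avg (fun x : Cube n => dist (f x) (f (x + Cube.e i)) ^ 2)}

section AvgLemmas

private lemma avg_mono {α : Type*} [Fintype α] {g h : α → ℝ} (hx : ∀ x, g x ≤ h x) :
    avg g ≤ avg h := by
  unfold avg
  exact div_le_div_of_nonneg_right (Finset.sum_le_sum fun i _ => hx i) (Nat.cast_nonneg _)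

private lemma avg_const {α : Type*} [Fintype α] [Nonempty α] (r : ℝ) :
    avg (fun _ : α => r) = r := by
  rw [avg, Finset.sum_const, Finset.card_univ, nsmul_eq_mul]
  exact mul_div_cancel_left₀ r (by exact_mod_cast Fintype.card_ne_zero)

private lemma avg_shift {k : ℕ} (g : Cube k → ℝ) (c : Cube k) :
    avg (fun x => g (x + c)) = avg g := by
  unfold avg
  congr 1
  exact Fintype.sum_equiv (Equiv.addRight c) _ _ fun x => rfl

private lemma avg_sum {α β : Type*} [Fintype α] (s : Finset β) (F : β → α → ℝ) :
    avg (fun x => ∑ i ∈ s, F i x) = ∑ i ∈ s, avg (F i) := by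
  unfold avg
  rw [Finset.sum_comm, Finset.sum_div]

private lemma avg_mul {α : Type*} [Fintype α] (r : ℝ) (g : α → ℝ) :
    avg (fun x => r * g x) = r * avg g := by
  unfold avg
  rw [← Finset.mul_sum, mul_div_assoc]

private lemma avg_comm {α β : Type*} [Fintype α] [Fintype β] (F : α → β → ℝ) :
    avg (fun x => avg (fun y => F x y)) = avg (fun y => avg (fun x => F x y)) := by
  unfold avg
  rw [← Finset.sum_div, ← Finset.sum_div, div_div, div_div, Finset.sum_comm, mul_comm]

end AvgLemmas

section Transfer

variable {H : Type*} [MetricSpace H]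

private lemma transfer {N M : ℕ} (T : ℝ)
    (hT : ∀ g : Cube M → H,
      avg (fun x : Cube M => dist (g x) (g (x + Cube.one M)) ^ 2) ≤
        T ^ 2 * M * ∑ i : Fin M, avg (fun x : Cube M => dist (g x) (g (x + Cube.e i)) ^ 2))
    (φ : Cube M → Cube N) (hφ : ∀ a b, φ (a + b) = φ a + φ b)
    (f : Cube N → H) :
    avg (fun x : Cube N => dist (f x) (f (x + φ (Cube.one M))) ^ 2) ≤
      T ^ 2 * M * ∑ i : Fin M,
        avg (fun x : Cube N => dist (f x) (f (x + φ (Cube.e i))) ^ 2) := by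
  haveI : Nonempty (Cube M) := ⟨0⟩
  have key : ∀ c : Cube M,
      avg (fun ε : Cube M =>
        avg (fun x : Cube N => dist (f (x + φ ε)) (f (x + φ ε + φ c)) ^ 2))
        = avg (fun x : Cube N => dist (f x) (f (x + φ c)) ^ 2) := by
    intro c
    have h1 : ∀ ε : Cube M,
        avg (fun x : Cube N => dist (f (x + φ ε)) (f (x + φ ε + φ c)) ^ 2)
          = avg (fun x : Cube N => dist (f x) (f (x + φ c)) ^ 2) := fun ε =>
      avg_shift (fun x => dist (f x) (f (x + φ c)) ^ 2) (φ ε)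
    rw [funext h1]
    exact avg_const _
  calc avg (fun x : Cube N => dist (f x) (f (x + φ (Cube.one M))) ^ 2)
      = avg (fun ε : Cube M => avg (fun x : Cube N =>
          dist (f (x + φ ε)) (f (x + φ ε + φ (Cube.one M))) ^ 2)) := (key _).symm
    _ = avg (fun x : Cube N => avg (fun ε : Cube M =>
          dist (f (x + φ ε)) (f (x + φ ε + φ (Cube.one M))) ^ 2)) :=
        avg_comm (fun ε x => dist (f (x + φ ε)) (f (x + φ ε + φ (Cube.one M))) ^ 2)
    _ ≤ avg (fun x : Cube N => T ^ 2 * M * ∑ i : Fin M, avg (fun ε : Cube M =>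
          dist (f (x + φ ε)) (f (x + φ ε + φ (Cube.e i))) ^ 2)) := by
        refine avg_mono fun x => ?_
        have h2 := hT (fun ε => f (x + φ ε))
        simpa only [hφ, ← add_assoc] using h2
    _ = T ^ 2 * M * ∑ i : Fin M, avg (fun x : Cube N => avg (fun ε : Cube M =>
          dist (f (x + φ ε)) (f (x + φ ε + φ (Cube.e i))) ^ 2)) := by
        rw [avg_mul, avg_sum]
    _ = T ^ 2 * M * ∑ i : Fin M,
          avg (fun x : Cube N => dist (f x) (f (x + φ (Cube.e i))) ^ 2) := by
        refine congrArg _ (Finset.sum_congr rfl fun i _ => ?_)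
        exact (avg_comm fun x ε =>
          dist (f (x + φ ε)) (f (x + φ ε + φ (Cube.e i))) ^ 2).trans (key _)

end Transfer

section OneMem

variable {H : Type*} [MetricSpace H]

private def psum (N k : ℕ) : Cube N :=
  Hamming.toHamming (fun j => if (j : ℕ) < k then 1 else 0)

private lemma psum_zero (N : ℕ) : psum N 0 = 0 := by
  funext j
  simp only [psum, Hamming.toHamming, Equiv.refl_apply, Nat.not_lt_zero, if_false]
  rfl

private lemma psum_last (N : ℕ) : psum N N = Cube.one N := by
  funext j
  simp [psum, Cube.one, Hamming.toHamming, j.isLt]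

private lemma psum_succ (N : ℕ) (i : Fin N) :
    psum N (i + 1) = psum N i + Cube.e i := by
  funext j
  show (if (j : ℕ) < i + 1 then 1 else 0) =
    (if (j : ℕ) < i then 1 else 0) + (if j = i then (1 : ZMod 2) else 0)
  rcases lt_trichotomy (j : ℕ) (i : ℕ) with h | h | h
  · rw [if_pos (Nat.lt_succ_of_lt h), if_pos h, if_neg (by
      intro hji; rw [hji] at h; exact lt_irrefl _ h), add_zero]
  · rw [if_pos (by omega), if_neg (by omega), if_pos (Fin.ext h), zero_add]
  · rw [if_neg (by omega), if_neg (by omega), if_neg (by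
      intro hji; rw [hji] at h; exact lt_irrefl _ h), add_zero]

private lemma one_mem (N : ℕ) (f : Cube N → H) :
    avg (fun x : Cube N => dist (f x) (f (x + Cube.one N)) ^ 2) ≤
      (1 : ℝ) ^ 2 * N *
        ∑ i : Fin N, avg (fun x : Cube N => dist (f x) (f (x + Cube.e i)) ^ 2) := by
  have hpt : ∀ x : Cube N, dist (f x) (f (x + Cube.one N)) ^ 2 ≤
      (N : ℝ) * ∑ i : Fin N,
        dist (f (x + psum N i)) (f (x + psum N i + Cube.e i)) ^ 2 := by
    intro x
    set d : Fin N → ℝ :=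
      fun i => dist (f (x + psum N i)) (f (x + psum N i + Cube.e i)) with hd
    have hpath : dist (f x) (f (x + Cube.one N)) ≤ ∑ i : Fin N, d i := by
      have h0 := dist_le_range_sum_dist (fun k => f (x + psum N k)) N
      rw [psum_zero, add_zero, psum_last] at h0
      refine h0.trans (le_of_eq ?_)
      rw [← Fin.sum_univ_eq_sum_range
        (fun k => dist (f (x + psum N k)) (f (x + psum N (k + 1)))) N]
      refine Finset.sum_congr rfl fun i _ => ?_
      show dist (f (x + psum N ↑i)) (f (x + psum N (↑i + 1))) = d i
      rw [hd, psum_succ, ← add_assoc]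
    calc dist (f x) (f (x + Cube.one N)) ^ 2 ≤ (∑ i : Fin N, d i) ^ 2 :=
          pow_le_pow_left₀ dist_nonneg hpath 2
      _ ≤ (N : ℝ) * ∑ i : Fin N, d i ^ 2 := by
          have := sq_sum_le_card_mul_sum_sq (s := (Finset.univ : Finset (Fin N))) (f := d)
          simpa using this
  calc avg (fun x : Cube N => dist (f x) (f (x + Cube.one N)) ^ 2)
      ≤ avg (fun x : Cube N => (N : ℝ) * ∑ i : Fin N,
          dist (f (x + psum N i)) (f (x + psum N i + Cube.e i)) ^ 2) := avg_mono hpt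
    _ = (N : ℝ) * ∑ i : Fin N, avg (fun x : Cube N =>
          dist (f (x + psum N i)) (f (x + psum N i + Cube.e i)) ^ 2) := by
        rw [avg_mul, avg_sum]
    _ = (N : ℝ) * ∑ i : Fin N,
          avg (fun x : Cube N => dist (f x) (f (x + Cube.e i)) ^ 2) := by
        refine congrArg _ (Finset.sum_congr rfl fun i _ => ?_)
        exact avg_shift (fun x => dist (f x) (f (x + Cube.e i)) ^ 2) (psum N i)
    _ = (1 : ℝ) ^ 2 * N * ∑ i : Fin N,
          avg (fun x : Cube N => dist (f x) (f (x + Cube.e i)) ^ 2) := by ring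

end OneMem

section Tensor

variable {H : Type*} [MetricSpace H] {m n : ℕ}

private def phiOut (m n : ℕ) : Cube m → Cube (m * n) := fun ε =>
  Hamming.toHamming fun k => Hamming.ofHamming ε (finProdFinEquiv.symm k).1

private def phiIn (m n : ℕ) (i : Fin m) : Cube n → Cube (m * n) := fun δ =>
  Hamming.toHamming fun k =>
    if (finProdFinEquiv.symm k).1 = i then Hamming.ofHamming δ (finProdFinEquiv.symm k).2
    else 0

private lemma phiOut_add (a b : Cube m) :
    phiOut m n (a + b) = phiOut m n a + phiOut m n b := rfl

private lemma phiOut_one : phiOut m n (Cube.one m) = Cube.one (m * n) := rfl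

private lemma phiOut_e (i : Fin m) : phiOut m n (Cube.e i) = phiIn m n i (Cube.one n) := rfl

private lemma phiIn_add (i : Fin m) (a b : Cube n) :
    phiIn m n i (a + b) = phiIn m n i a + phiIn m n i b := by
  funext k
  show (if (finProdFinEquiv.symm k).1 = i then
        Hamming.ofHamming (a + b) (finProdFinEquiv.symm k).2 else 0)
      = (if (finProdFinEquiv.symm k).1 = i then
          Hamming.ofHamming a (finProdFinEquiv.symm k).2 else 0)
        + (if (finProdFinEquiv.symm k).1 = i then
            Hamming.ofHamming b (finProdFinEquiv.symm k).2 else 0)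
  rw [Hamming.ofHamming_add]
  split <;> simp

private lemma phiIn_e (i : Fin m) (j : Fin n) :
    phiIn m n i (Cube.e j) = Cube.e (finProdFinEquiv (i, j)) := by
  funext k
  show (if (finProdFinEquiv.symm k).1 = i then
        (if (finProdFinEquiv.symm k).2 = j then (1 : ZMod 2) else 0) else 0)
      = (if k = finProdFinEquiv (i, j) then 1 else 0)
  have hiff : (k = finProdFinEquiv (i, j)) ↔
      ((finProdFinEquiv.symm k).1 = i ∧ (finProdFinEquiv.symm k).2 = j) := by
    rw [← Equiv.symm_apply_eq, Prod.ext_iff]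
  rw [if_congr hiff rfl rfl]
  set a := (finProdFinEquiv.symm k).1
  set b := (finProdFinEquiv.symm k).2
  by_cases h1 : a = i <;> by_cases h2 : b = j <;> simp [h1, h2]

private lemma tensor {T₁ T₂ : ℝ}
    (hT₁ : ∀ g : Cube m → H,
      avg (fun x : Cube m => dist (g x) (g (x + Cube.one m)) ^ 2) ≤
        T₁ ^ 2 * m * ∑ i : Fin m, avg (fun x : Cube m => dist (g x) (g (x + Cube.e i)) ^ 2))
    (hT₂ : ∀ g : Cube n → H,
      avg (fun x : Cube n => dist (g x) (g (x + Cube.one n)) ^ 2) ≤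
        T₂ ^ 2 * n * ∑ i : Fin n, avg (fun x : Cube n => dist (g x) (g (x + Cube.e i)) ^ 2))
    (f : Cube (m * n) → H) :
    avg (fun x : Cube (m * n) => dist (f x) (f (x + Cube.one (m * n))) ^ 2) ≤
      (T₁ * T₂) ^ 2 * (m * n : ℕ) *
        ∑ k : Fin (m * n), avg (fun x : Cube (m * n) => dist (f x) (f (x + Cube.e k)) ^ 2) := by
  have h1 := transfer T₁ hT₁ (phiOut m n) phiOut_add f
  rw [phiOut_one] at h1
  have h2 : ∀ i : Fin m,
      avg (fun x : Cube (m * n) => dist (f x) (f (x + phiOut m n (Cube.e i))) ^ 2) ≤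
        T₂ ^ 2 * n * ∑ j : Fin n,
          avg (fun x : Cube (m * n) =>
            dist (f x) (f (x + Cube.e (finProdFinEquiv (i, j)))) ^ 2) := by
    intro i
    have h3 := transfer T₂ hT₂ (phiIn m n i) (phiIn_add i) f
    rw [phiOut_e]
    simp only [phiIn_e] at h3
    exact h3
  have h4 : ∑ i : Fin m, ∑ j : Fin n,
      avg (fun x : Cube (m * n) =>
        dist (f x) (f (x + Cube.e (finProdFinEquiv (i, j)))) ^ 2)
      = ∑ k : Fin (m * n),
          avg (fun x : Cube (m * n) => dist (f x) (f (x + Cube.e k)) ^ 2) := by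
    rw [show (∑ k : Fin (m * n),
          avg (fun x : Cube (m * n) => dist (f x) (f (x + Cube.e k)) ^ 2))
        = ∑ p : Fin m × Fin n,
            avg (fun x : Cube (m * n) =>
              dist (f x) (f (x + Cube.e (finProdFinEquiv p))) ^ 2) from
      (Fintype.sum_equiv finProdFinEquiv _ _ fun p => rfl).symm,
      Fintype.sum_prod_type]
  calc avg (fun x : Cube (m * n) => dist (f x) (f (x + Cube.one (m * n))) ^ 2)
      ≤ T₁ ^ 2 * m * ∑ i : Fin m,
          avg (fun x : Cube (m * n) => dist (f x) (f (x + phiOut m n (Cube.e i))) ^ 2) := h1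
    _ ≤ T₁ ^ 2 * m * ∑ i : Fin m, (T₂ ^ 2 * n * ∑ j : Fin n,
          avg (fun x : Cube (m * n) =>
            dist (f x) (f (x + Cube.e (finProdFinEquiv (i, j)))) ^ 2)) := by
        refine mul_le_mul_of_nonneg_left (Finset.sum_le_sum fun i _ => h2 i) (by positivity)
    _ = (T₁ * T₂) ^ 2 * (m * n : ℕ) * ∑ k : Fin (m * n),
          avg (fun x : Cube (m * n) => dist (f x) (f (x + Cube.e k)) ^ 2) := by
        rw [← Finset.mul_sum, ← h4]
        push_cast
        ring

end Tensor

section MainAux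

variable {H : Type*} [MetricSpace H]

private def TSet (H : Type*) [MetricSpace H] (N : ℕ) : Set ℝ :=
  {T : ℝ | 0 < T ∧ ∀ f : Cube N → H,
    avg (fun x : Cube N => dist (f x) (f (x + Cube.one N)) ^ 2) ≤
      T ^ 2 * N * ∑ i : Fin N, avg (fun x : Cube N => dist (f x) (f (x + Cube.e i)) ^ 2)}

private lemma Tn_eq_sInf (N : ℕ) : Tn H N = sInf (TSet H N) := rfl

private lemma TSet_bddBelow (N : ℕ) : BddBelow (TSet H N) :=
  ⟨0, fun _ hT => hT.1.le⟩

private lemma TSet_nonempty (N : ℕ) : (TSet H N).Nonempty :=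
  ⟨1, one_pos, one_mem N⟩

private lemma TSet_sInf_nonneg (N : ℕ) : 0 ≤ sInf (TSet H N) :=
  le_csInf (TSet_nonempty N) fun _ hT => hT.1.le

end MainAux

/-- For every metric space `H` and all `m, n ≥ 1`,
`T_{mn}(H) ≤ T_m(H) * T_n(H)`. -/
theorem Tn_submultiplicative (H : Type*) [MetricSpace H] (m n : ℕ)
    (hm : 1 ≤ m) (hn : 1 ≤ n) :
    Tn H (m * n) ≤ Tn H m * Tn H n := by
  rw [Tn_eq_sInf, Tn_eq_sInf, Tn_eq_sInf]
  have key : ∀ T₁ ∈ TSet H m, ∀ T₂ ∈ TSet H n, sInf (TSet H (m * n)) ≤ T₁ * T₂ := by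
    intro T₁ h₁ T₂ h₂
    exact csInf_le (TSet_bddBelow _) ⟨mul_pos h₁.1 h₂.1, fun f => tensor h₁.2 h₂.2 f⟩
  have step : ∀ T₂ ∈ TSet H n, sInf (TSet H (m * n)) ≤ sInf (TSet H m) * T₂ := by
    intro T₂ h₂
    have hdiv : sInf (TSet H (m * n)) / T₂ ≤ sInf (TSet H m) :=
      le_csInf (TSet_nonempty m) fun T₁ h₁ => (div_le_iff₀ h₂.1).mpr (key T₁ h₁ T₂ h₂)
    exact (div_le_iff₀ h₂.1).mp hdiv
  rcases (TSet_sInf_nonneg (H := H) m).eq_or_lt with h0 | hpos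
  · have h1 := step 1 ⟨one_pos, one_mem n⟩
    rw [← h0, zero_mul] at h1 ⊢
    exact h1.trans (by norm_num)
  · have hdiv : sInf (TSet H (m * n)) / sInf (TSet H m) ≤ sInf (TSet H n) :=
      le_csInf (TSet_nonempty n) fun T₂ h₂ => (div_le_iff₀' hpos).mpr (step T₂ h₂)
    exact (div_le_iff₀' hpos).mp hdiv
end

section
/- Fix η ∈ (0,1]. On the set B_∞ of all finite binary strings define d_η(x,y) = |h(y) − h(x)| + 2η·(min(h(x),h(y)) − h(lca(x,y))), where h(x) is the length of the string x and lca(x,y) is the longest common prefix of x and y. Then: (1) d_η is a metric on B_∞; and (2) for all x, y ∈ B_∞, d_η(x,y) ≤ d_T(x,y) ≤ η^{-1}·d_η(x,y), where d_T(x,y) = h(x) + h(y) − 2h(lca(x,y)) is the tree distance; consequently the identity map from (B_∞, d_T) to (B_∞, d_η) has distortion at most η^{-1}, and hence every finite subset S of (B_∞, d_T) satisfies c_{(B_∞,d_η)}(S) ≤ η^{-1}. -/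
/-- The longest common prefix of two binary strings. -/
def lcp : List Bool → List Bool → List Bool
  | a :: as, b :: bs => if a = b then a :: lcp as bs else []
  | _, _ => []

theorem lcp_self : ∀ x : List Bool, lcp x x = x
  | [] => rfl
  | a :: as => by simp [lcp, lcp_self as]

theorem lcp_comm : ∀ x y : List Bool, lcp x y = lcp y x
  | [], [] => rfl
  | [], _ :: _ => rfl
  | _ :: _, [] => rfl
  | a :: as, b :: bs => by
    by_cases h : a = b
    · subst h; simp [lcp, lcp_comm as bs]
    · simp [lcp, h, Ne.symm h]

theorem lcp_prefix_left : ∀ x y : List Bool, lcp x y <+: x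
  | [], [] => List.nil_prefix
  | [], _ :: _ => List.nil_prefix
  | _ :: _, [] => List.nil_prefix
  | a :: as, b :: bs => by
    by_cases h : a = b
    · obtain ⟨t, ht⟩ := lcp_prefix_left as bs
      exact ⟨t, by simp [lcp, h, ht]⟩
    · simp [lcp, h]

theorem lcp_prefix_right (x y : List Bool) : lcp x y <+: y :=
  lcp_comm x y ▸ lcp_prefix_left y x

theorem prefix_lcp : ∀ p x y : List Bool, p <+: x → p <+: y → p <+: lcp x y
  | [], _, _, _, _ => List.nil_prefix
  | _ :: _, [], _, hx, _ => absurd hx (by simp)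
  | _ :: _, _, [], _, hy => absurd hy (by simp)
  | c :: cs, a :: as, b :: bs, hx, hy => by
    rw [List.cons_prefix_cons] at hx hy
    obtain ⟨rfl, hx⟩ := hx
    obtain ⟨rfl, hy⟩ := hy
    obtain ⟨t, ht⟩ := prefix_lcp cs as bs hx hy
    exact ⟨t, by simp [lcp, ht]⟩

/-- The (natural-number valued) tree distance `d(x,y) = |x| + |y| - 2 |lcp x y|` on binary
strings. -/
def treeDistNat (x y : List Bool) : ℕ :=
  (x.length - (lcp x y).length) + (y.length - (lcp x y).length)

theorem treeDistNat_self (x : List Bool) : treeDistNat x x = 0 := by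
  simp [treeDistNat, lcp_self]

theorem treeDistNat_comm (x y : List Bool) : treeDistNat x y = treeDistNat y x := by
  unfold treeDistNat; rw [lcp_comm]; omega

theorem treeDistNat_triangle (x y z : List Bool) :
    treeDistNat x z ≤ treeDistNat x y + treeDistNat y z := by
  have h1 := (lcp_prefix_left x y).length_le
  have h2 := (lcp_prefix_right x y).length_le
  have h3 := (lcp_prefix_left y z).length_le
  have h4 := (lcp_prefix_right y z).length_le
  have h5 := (lcp_prefix_left x z).length_le
  have h6 := (lcp_prefix_right x z).length_le
  have key : (lcp x y).length + (lcp y z).length ≤ y.length + (lcp x z).length := by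
    rcases List.prefix_or_prefix_of_prefix (lcp_prefix_right x y) (lcp_prefix_left y z)
      with h | h
    · have hp : lcp x y <+: lcp x z :=
        prefix_lcp _ _ _ (lcp_prefix_left x y) (h.trans (lcp_prefix_right y z))
      have := hp.length_le
      omega
    · have hp : lcp y z <+: lcp x z :=
        prefix_lcp _ _ _ (h.trans (lcp_prefix_left x y)) (lcp_prefix_right y z)
      have := hp.length_le
      omega
  unfold treeDistNat
  omega

theorem treeDistNat_eq_zero {x y : List Bool} (h : treeDistNat x y = 0) : x = y := by
  have h1 := (lcp_prefix_left x y).length_le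
  have h2 := (lcp_prefix_right x y).length_le
  have hx : lcp x y = x := (lcp_prefix_left x y).eq_of_length (by unfold treeDistNat at h; omega)
  have hy : lcp x y = y := (lcp_prefix_right x y).eq_of_length (by unfold treeDistNat at h; omega)
  rw [← hx, hy]

/-- The infinite binary tree `B_∞`, realized as the set of finite binary strings, equipped with
the tree distance `d(x,y) = |x| + |y| - 2 |lcp x y|`. -/
def BTree : Type := List Bool

/-- The underlying binary string of a vertex of `B_∞`. -/
def BTree.toList (x : BTree) : List Bool := x

instance : TopologicalSpace BTree := ⊥
instance : DiscreteTopology BTree := ⟨rfl⟩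

noncomputable instance : MetricSpace BTree :=
  MetricSpace.ofDistTopology (fun x y => (treeDistNat x.toList y.toList : ℝ))
    (fun x => by simp [treeDistNat_self])
    (fun x y => by
      show (treeDistNat x.toList y.toList : ℝ) = (treeDistNat y.toList x.toList : ℝ)
      rw [treeDistNat_comm])
    (fun x y z => by
      show (treeDistNat x.toList z.toList : ℝ) ≤
        (treeDistNat x.toList y.toList : ℝ) + (treeDistNat y.toList z.toList : ℝ)
      exact_mod_cast treeDistNat_triangle x.toList y.toList z.toList)
    (fun s => by
      refine ⟨fun _ x hx => ⟨1 / 2, by norm_num, fun y hy => ?_⟩, fun _ => isOpen_discrete s⟩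
      have h0 : treeDistNat x.toList y.toList = 0 := by
        have : (treeDistNat x.toList y.toList : ℝ) < 1 / 2 := hy
        exact_mod_cast by
          by_contra hne
          have h1 : (1 : ℝ) ≤ (treeDistNat x.toList y.toList : ℝ) := by
            exact_mod_cast Nat.one_le_iff_ne_zero.2 hne
          linarith
      have : x.toList = y.toList := treeDistNat_eq_zero h0
      have hxy : x = y := this
      exact hxy ▸ hx)
    (fun x y h => by
      have h' : (treeDistNat x.toList y.toList : ℝ) = 0 := h
      have h0 : treeDistNat x.toList y.toList = 0 := by exact_mod_cast h'
      exact treeDistNat_eq_zero h0)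

theorem BTree.dist_eq (x y : BTree) : dist x y = (treeDistNat x.toList y.toList : ℝ) := rfl

/-- The complete binary tree `B_n` of depth `n`: binary strings of length at most `n`, with the
tree distance. -/
def Bn (n : ℕ) : Type := {x : BTree // x.toList.length ≤ n}

noncomputable instance (n : ℕ) : MetricSpace (Bn n) :=
  inferInstanceAs (MetricSpace {x : BTree // x.toList.length ≤ n})

/-- The real-valued tree distance `d_T(x,y) = h(x) + h(y) - 2 h(lcp x y)` on binary strings,
where `h` is the length. -/
noncomputable def dTree (x y : List Bool) : ℝ :=
  (x.length : ℝ) + (y.length : ℝ) - 2 * ((lcp x y).length : ℝ)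

/-- The contracted distance
`d_η(x,y) = |h(y) - h(x)| + 2 η (min (h x) (h y) - h (lcp x y))` on binary strings. -/
noncomputable def dEta (η : ℝ) (x y : List Bool) : ℝ :=
  |(y.length : ℝ) - (x.length : ℝ)| +
    2 * η * ((min x.length y.length : ℕ) - ((lcp x y).length : ℝ))

theorem dTree_eq_treeDistNat (x y : List Bool) : dTree x y = (treeDistNat x y : ℝ) := by
  have h1 := (lcp_prefix_left x y).length_le
  have h2 := (lcp_prefix_right x y).length_le
  unfold dTree treeDistNat
  push_cast [h1, h2]
  ring

theorem dTree_nonneg (x y : List Bool) : 0 ≤ dTree x y := by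
  rw [dTree_eq_treeDistNat]; positivity

theorem abs_sub_le_dTree (x y : List Bool) : |(y.length : ℝ) - (x.length : ℝ)| ≤ dTree x y := by
  have h1 := (lcp_prefix_left x y).length_le
  have h2 := (lcp_prefix_right x y).length_le
  unfold dTree
  rcases le_total x.length y.length with h | h
  · have h' : (x.length : ℝ) ≤ (y.length : ℝ) := by exact_mod_cast h
    rw [abs_of_nonneg (sub_nonneg.2 h')]
    have : ((lcp x y).length : ℝ) ≤ (x.length : ℝ) := by exact_mod_cast h1
    linarith
  · have h' : (y.length : ℝ) ≤ (x.length : ℝ) := by exact_mod_cast h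
    rw [abs_of_nonpos (sub_nonpos.2 h')]
    have : ((lcp x y).length : ℝ) ≤ (y.length : ℝ) := by exact_mod_cast h2
    linarith

/-- The key decomposition `d_η = (1-η)|h y - h x| + η d_T`. -/
theorem dEta_decomp (η : ℝ) (x y : List Bool) :
    dEta η x y = (1 - η) * |(y.length : ℝ) - (x.length : ℝ)| + η * dTree x y := by
  unfold dEta dTree
  rw [Nat.cast_min]
  rcases le_total x.length y.length with h | h
  · have h' : (x.length : ℝ) ≤ (y.length : ℝ) := by exact_mod_cast h
    rw [abs_of_nonneg (sub_nonneg.2 h'), min_eq_left h']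
    ring
  · have h' : (y.length : ℝ) ≤ (x.length : ℝ) := by exact_mod_cast h
    rw [abs_of_nonpos (sub_nonpos.2 h'), min_eq_right h']
    ring

theorem dEta_nonneg {η : ℝ} (hη0 : 0 < η) (hη1 : η ≤ 1) (x y : List Bool) :
    0 ≤ dEta η x y := by
  rw [dEta_decomp]
  have h1 := abs_nonneg ((y.length : ℝ) - (x.length : ℝ))
  have h2 := dTree_nonneg x y
  nlinarith

theorem dEta_pos {η : ℝ} (hη0 : 0 < η) (hη1 : η ≤ 1) {x y : List Bool} (hxy : x ≠ y) :
    0 < dEta η x y := by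
  rcases lt_or_eq_of_le (dEta_nonneg hη0 hη1 x y) with h | h
  · exact h
  · exfalso
    apply hxy
    rw [dEta_decomp] at h
    have h1 := abs_nonneg ((y.length : ℝ) - (x.length : ℝ))
    have h2 := dTree_nonneg x y
    have hT : dTree x y = 0 := by nlinarith
    rw [dTree_eq_treeDistNat] at hT
    exact treeDistNat_eq_zero (by exact_mod_cast hT)

open scoped Classical in
theorem lipNorm_le_of {X H : Type*} [PseudoMetricSpace X] [PseudoMetricSpace H] [Nonempty X]
    (f : X → H) (C : ℝ) (hC : 0 ≤ C)
    (hpos : ∀ x y : X, x ≠ y → 0 < dist x y)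
    (h : ∀ x y : X, dist (f x) (f y) ≤ C * dist x y) : lipNorm f ≤ C := by
  refine ciSup_le fun p => ?_
  by_cases hp : p.1 = p.2
  · simpa [hp] using hC
  · rw [if_neg hp, div_le_iff₀ (hpos _ _ hp)]
    exact h _ _

open scoped Classical in
theorem colipNorm_le_of {X H : Type*} [PseudoMetricSpace X] [PseudoMetricSpace H] [Nonempty X]
    (f : X → H) (C : ℝ) (hC : 0 ≤ C)
    (hpos : ∀ x y : X, x ≠ y → 0 < dist (f x) (f y))
    (h : ∀ x y : X, dist x y ≤ C * dist (f x) (f y)) : colipNorm f ≤ C := by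
  refine ciSup_le fun p => ?_
  by_cases hp : p.1 = p.2
  · simpa [hp] using hC
  · rw [if_neg hp, div_le_iff₀ (hpos _ _ hp)]
    exact h _ _

open scoped Classical in
theorem colipNorm_nonneg_of {X H : Type*} [PseudoMetricSpace X] [PseudoMetricSpace H]
    [Nonempty X] (f : X → H) (C : ℝ)
    (hpos : ∀ x y : X, x ≠ y → 0 < dist (f x) (f y))
    (h : ∀ x y : X, dist x y ≤ C * dist (f x) (f y)) : 0 ≤ colipNorm f := by
  obtain ⟨x⟩ := ‹Nonempty X›
  have hb : BddAbove (Set.range fun p : X × X =>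
      if p.1 = p.2 then (0 : ℝ) else dist p.1 p.2 / dist (f p.1) (f p.2)) := by
    refine ⟨max C 0, ?_⟩
    rintro _ ⟨p, rfl⟩
    by_cases hp : p.1 = p.2
    · simp [hp]
    · simp only [if_neg hp]
      exact le_max_of_le_left ((div_le_iff₀ (hpos _ _ hp)).2 (h _ _))
  have := le_ciSup hb (x, x)
  simpa [colipNorm] using this

theorem distortion_le_of_between {η : ℝ} (hη0 : 0 < η) (hη1 : η ≤ 1)
    {X : Type*} [PseudoMetricSpace X] [Nonempty X]
    (iH : PseudoMetricSpace (List Bool))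
    (hd : ∀ x y : List Bool, @dist _ iH.toDist x y = dEta η x y)
    (f : X → List Bool) (hinj : Function.Injective f)
    (hposX : ∀ x y : X, x ≠ y → 0 < dist x y)
    (hdX : ∀ x y : X, dist x y = dTree (f x) (f y)) :
    @distortion X (List Bool) _ iH f ≤ η⁻¹ := by
  have hηinv : (0 : ℝ) ≤ η⁻¹ := le_of_lt (inv_pos.2 hη0)
  have hposH : ∀ x y : X, x ≠ y → 0 < @dist _ iH.toDist (f x) (f y) := by
    intro x y hxy
    rw [hd]
    exact dEta_pos hη0 hη1 (fun hfe => hxy (hinj hfe))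
  have hlip : @lipNorm X (List Bool) _ iH f ≤ 1 := by
    refine @lipNorm_le_of X (List Bool) _ iH _ f 1 zero_le_one hposX (fun x y => ?_)
    rw [hd, hdX, one_mul, dEta_decomp]
    have h1 := abs_sub_le_dTree (f x) (f y)
    have h2 := abs_nonneg (((f y).length : ℝ) - ((f x).length : ℝ))
    nlinarith
  have hcolip_bound : ∀ x y : X, dist x y ≤ η⁻¹ * @dist _ iH.toDist (f x) (f y) := by
    intro x y
    rw [hd, hdX, dEta_decomp]
    have h1 := abs_nonneg (((f y).length : ℝ) - ((f x).length : ℝ))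
    rw [inv_mul_eq_div, le_div_iff₀ hη0]
    nlinarith
  have hcolip : @colipNorm X (List Bool) _ iH f ≤ η⁻¹ :=
    @colipNorm_le_of X (List Bool) _ iH _ f η⁻¹ hηinv hposH hcolip_bound
  have hcolip0 : 0 ≤ @colipNorm X (List Bool) _ iH f :=
    @colipNorm_nonneg_of X (List Bool) _ iH _ f η⁻¹ hposH hcolip_bound
  have := mul_le_mul hlip hcolip hcolip0 zero_le_one
  simpa [distortion] using this

/-- For `η ∈ (0,1]`: (1) `d_η` is a metric on `B_∞` (the set of finite
binary strings); (2) `d_η ≤ d_T ≤ η⁻¹ d_η` pointwise, where `d_T` is the tree distance;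
consequently (3) for every metric-space structure on `List Bool` whose distance is `d_η`, the
identity map from `(B_∞, d_T)` to `(B_∞, d_η)` has distortion at most `η⁻¹`, and hence every
finite nonempty subset `S` of `(B_∞, d_T)` satisfies `c_{(B_∞, d_η)}(S) ≤ η⁻¹`. -/
theorem dEta_metric_and_embedding (η : ℝ) (hη0 : 0 < η) (hη1 : η ≤ 1) :
    ((∀ x : List Bool, dEta η x x = 0) ∧
      (∀ x y : List Bool, dEta η x y = 0 → x = y) ∧
      (∀ x y : List Bool, dEta η x y = dEta η y x) ∧
      (∀ x y z : List Bool, dEta η x z ≤ dEta η x y + dEta η y z)) ∧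
    (∀ x y : List Bool, dEta η x y ≤ dTree x y ∧ dTree x y ≤ η⁻¹ * dEta η x y) ∧
    (∀ iH : MetricSpace (List Bool), (∀ x y : List Bool, @dist _ iH.toDist x y = dEta η x y) →
      @distortion BTree (List Bool) _ iH.toPseudoMetricSpace BTree.toList ≤ η⁻¹ ∧
      ∀ S : Set BTree, S.Finite → S.Nonempty → ∀ ε : ℝ, 0 < ε →
        ∃ f : S → List Bool, Function.Injective f ∧
          @distortion S (List Bool) _ iH.toPseudoMetricSpace f ≤ η⁻¹ + ε) := by
  have hpt : ∀ x y : List Bool, dEta η x y ≤ dTree x y ∧ dTree x y ≤ η⁻¹ * dEta η x y := by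
    intro x y
    constructor
    · rw [dEta_decomp]
      have h1 := abs_sub_le_dTree x y
      have h2 := abs_nonneg ((y.length : ℝ) - (x.length : ℝ))
      nlinarith
    · rw [dEta_decomp, inv_mul_eq_div, le_div_iff₀ hη0]
      have h1 := abs_nonneg ((y.length : ℝ) - (x.length : ℝ))
      nlinarith
  refine ⟨⟨?_, ?_, ?_, ?_⟩, hpt, ?_⟩
  · intro x
    simp [dEta, lcp_self]
  · intro x y h
    by_contra hxy
    exact absurd h (ne_of_gt (dEta_pos hη0 hη1 hxy))
  · intro x y
    unfold dEta
    rw [abs_sub_comm, Nat.min_comm, lcp_comm]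
  · intro x y z
    rw [dEta_decomp, dEta_decomp, dEta_decomp]
    have hA : |(z.length : ℝ) - (x.length : ℝ)| ≤
        |(y.length : ℝ) - (x.length : ℝ)| + |(z.length : ℝ) - (y.length : ℝ)| := by
      have := abs_sub_le ((z.length : ℝ)) ((y.length : ℝ)) ((x.length : ℝ))
      linarith
    have hD : dTree x z ≤ dTree x y + dTree y z := by
      rw [dTree_eq_treeDistNat, dTree_eq_treeDistNat, dTree_eq_treeDistNat]
      exact_mod_cast treeDistNat_triangle x y z
    nlinarith
  · intro iH hd
    haveI : Nonempty BTree := ⟨([] : List Bool)⟩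
    constructor
    · refine distortion_le_of_between hη0 hη1 iH.toPseudoMetricSpace hd BTree.toList
        (fun a b h => h) (fun x y hxy => dist_pos.2 hxy) (fun x y => ?_)
      rw [BTree.dist_eq, dTree_eq_treeDistNat]
    · intro S hSfin hSne ε hε
      haveI : Nonempty S := hSne.to_subtype
      refine ⟨fun s => BTree.toList s.1, fun a b h => Subtype.ext h, ?_⟩
      have hbound : @distortion S (List Bool) _ iH.toPseudoMetricSpace
          (fun s => BTree.toList s.1) ≤ η⁻¹ := by
        refine distortion_le_of_between hη0 hη1 iH.toPseudoMetricSpace hd _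
          (fun a b h => Subtype.ext h) (fun x y hxy => dist_pos.2 hxy) (fun x y => ?_)
        rw [Subtype.dist_eq, BTree.dist_eq, dTree_eq_treeDistNat]
      have : (0:ℝ) < ε := hε
      linarith
end
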